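/- Let N ≥ 1, let w : {0,…,N} → ℤ_{>0} be a weight function, and let f ∈ ℂ[x_0,…,x_N] be weighted homogeneous of weighted degree d > 0 with respect to w, with d ≠ w(i) for every i ∈ {0,…,N}. Suppose f defines a quasi-smooth hypersurface: for every nonzero v ∈ ℂ^{N+1} with f(v) = 0, there exists an index i with (∂f/∂x_i)(v) ≠ 0. Then for every index i_0, the only weighted homogeneous polynomial g of weighted degree w(i_0) lying in the principal ideal generated by f is g = 0. -/

import Mathlib

/-!
A nonzero multiple of `f` has weighted degree at least `d`, so `d < w i₀`. Then no monomial of `f`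
involves `x_{i₀}`, and at the coordinate point `Pi.single i₀ 1` both `f` and each `∂f/∂x_j` reduce
to their constant terms. These vanish since `d ≠ 0` and `d ≠ w j`, so the point is singular on the
cone over `{f = 0}`, contradicting quasi-smoothness.
-/

open MvPolynomial

namespace MvPolynomial

variable {σ R M : Type*} [CommSemiring R]

section CanonicallyOrdered

variable [AddCommMonoid M] [PartialOrder M] [CanonicallyOrderedAdd M] {w : σ → M}
  {f g : MvPolynomial σ R} {d m : M}

theorem IsWeightedHomogeneous.le_of_dvd (hf : IsWeightedHomogeneous w f d)
    (hg : IsWeightedHomogeneous w g m) (hfg : f ∣ g) (hg0 : g ≠ 0) : d ≤ m := by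
  classical
  obtain ⟨h, rfl⟩ := hfg
  obtain ⟨e, he⟩ := exists_coeff_ne_zero hg0
  obtain ⟨x, hx, hx0⟩ := Finset.exists_ne_zero_of_sum_ne_zero (coeff_mul f h e ▸ he)
  rw [Finset.HasAntidiagonal.mem_antidiagonal] at hx
  calc d = Finsupp.weight w x.1 := (hf (left_ne_zero_of_mul hx0)).symm
    _ ≤ Finsupp.weight w e := by rw [← hx, map_add]; exact le_self_add
    _ = m := hg he

theorem IsWeightedHomogeneous.notMem_vars_of_lt [IsOrderedAddMonoid M] {i : σ}
    (hf : IsWeightedHomogeneous w f d) (hi : d < w i) : i ∉ f.vars := by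
  rw [mem_vars_iff_mem_support]
  rintro ⟨e, he, hie⟩
  have hwi := Finsupp.le_weight_of_ne_zero' w (Finsupp.mem_support_iff.1 hie)
  rw [hf (mem_support_iff.1 he)] at hwi
  exact hi.not_ge hwi

end CanonicallyOrdered

theorem vars_pderiv_subset (i : σ) (p : MvPolynomial σ R) : (pderiv i p).vars ⊆ p.vars := by
  classical
  intro j hj
  rw [mem_vars_iff_mem_support] at hj ⊢
  obtain ⟨e, he, hje⟩ := hj
  refine ⟨e + Finsupp.single i 1, ?_, ?_⟩
  · rw [mem_support_iff, coeff_pderiv] at he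
    exact mem_support_iff.2 (left_ne_zero_of_mul he)
  · rw [Finsupp.mem_support_iff] at hje ⊢
    simp only [Finsupp.add_apply, ne_eq, Nat.add_eq_zero_iff, hje, false_and, not_false_eq_true]

theorem constantCoeff_pderiv (i : σ) (p : MvPolynomial σ R) :
    constantCoeff (pderiv i p) = coeff (Finsupp.single i 1) p := by
  rw [constantCoeff_eq, coeff_pderiv]
  simp

theorem eval_piSingle_of_notMem_vars [DecidableEq σ] {p : MvPolynomial σ R} {i : σ}
    (hi : i ∉ p.vars) (a : R) : eval (Pi.single i a) p = constantCoeff p :=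
  eval₂Hom_eq_constantCoeff_of_vars _ fun _ hj => by
    simp [Pi.single_eq_of_ne (ne_of_mem_of_not_mem hj hi)]

end MvPolynomial

theorem no_weight_degree_element_in_quasi_smooth_hypersurface_ideal_general
    (N : ℕ) (w : Fin (N + 1) → ℕ)
    (f : MvPolynomial (Fin (N + 1)) ℂ) (d : ℕ) (hd : 0 < d)
    (hf : IsWeightedHomogeneous w f d)
    (hlc : ∀ i, d ≠ w i)
    -- quasi-smoothness: at every nonzero point of the affine cone over `{f = 0}`
    -- some partial derivative of `f` does not vanish.
    (hqs : ∀ v : Fin (N + 1) → ℂ, v ≠ 0 → eval v f = 0 →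
      ∃ i, eval v (pderiv i f) ≠ 0) :
    ∀ (i₀ : Fin (N + 1)) (g : MvPolynomial (Fin (N + 1)) ℂ),
      IsWeightedHomogeneous w g (w i₀) →
      g ∈ Ideal.span ({f} : Set (MvPolynomial (Fin (N + 1)) ℂ)) →
      g = 0 := by
  intro i₀ g hg hgf
  by_contra hg0
  have hd_lt : d < w i₀ :=
    lt_of_le_of_ne (hf.le_of_dvd hg (Ideal.mem_span_singleton.1 hgf) hg0) (hlc i₀)
  have hi₀ : i₀ ∉ f.vars := hf.notMem_vars_of_lt hd_lt
  have hf_vanishes : eval (Pi.single i₀ 1) f = 0 := by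
    rw [eval_piSingle_of_notMem_vars hi₀, constantCoeff_eq]
    exact hf.coeff_eq_zero 0 (by simpa using hd.ne)
  obtain ⟨j, hj⟩ := hqs (Pi.single i₀ 1) (by simp) hf_vanishes
  apply hj
  rw [eval_piSingle_of_notMem_vars (fun h => hi₀ (vars_pderiv_subset j f h)), constantCoeff_pderiv]
  exact hf.coeff_eq_zero _ (by simpa [Finsupp.weight_single] using (hlc j).symm)

/-- If `f` defines a quasi-smooth weighted hypersurface which is not an
intersection with a linear cone, then for every index `i₀` the only weighted homogeneous
polynomial of weighted degree `w i₀` lying in the principal ideal `(f)` is zero. -/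
theorem no_weight_degree_element_in_quasi_smooth_hypersurface_ideal
    (N : ℕ) (hN : 1 ≤ N) (w : Fin (N + 1) → ℕ) (hw : ∀ i, 0 < w i)
    (f : MvPolynomial (Fin (N + 1)) ℂ) (d : ℕ) (hd : 0 < d)
    (hf : IsWeightedHomogeneous w f d)
    (hlc : ∀ i, d ≠ w i)
    -- quasi-smoothness: at every nonzero point of the affine cone over `{f = 0}`
    -- some partial derivative of `f` does not vanish.
    (hqs : ∀ v : Fin (N + 1) → ℂ, v ≠ 0 → eval v f = 0 →
      ∃ i, eval v (pderiv i f) ≠ 0) :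
    ∀ (i₀ : Fin (N + 1)) (g : MvPolynomial (Fin (N + 1)) ℂ),
      IsWeightedHomogeneous w g (w i₀) →
      g ∈ Ideal.span ({f} : Set (MvPolynomial (Fin (N + 1)) ℂ)) →
      g = 0 :=
  no_weight_degree_element_in_quasi_smooth_hypersurface_ideal_general N w f d hd hf hlc hqs
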